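/- Let u* be the B^s solution of the integral equation u + (α−Δ)^{-1}(W u) = (α−Δ)^{-1} f, with α > 0, s ≥ 0, W, f ∈ B^s(ℝ^d). Then u* ∈ B^{s+2}(ℝ^d) with ‖u*‖_{B^{s+2}} ≤ (1/min{α,1})(2^{s/2}‖W‖_{B^s}‖u*‖_{B^s} + ‖f‖_{B^s}). -/

import Mathlib

open MeasureTheory Complex
open scoped ENNReal

noncomputable section

/-- Euclidean space `ℝ^d`. -/
abbrev Ed (d : ℕ) := EuclideanSpace ℝ (Fin d)

/-- Inverse Fourier transform (with the convention of the paper):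
`g(x) = ∫ v(ξ) e^{i x·ξ} dξ`, so that `v = ĝ` is the Fourier transform of `g`. -/
def invFT {d : ℕ} (v : Ed d → ℂ) (x : Ed d) : ℂ :=
  ∫ ξ, v ξ * Complex.exp (Complex.I * ((inner ℝ ξ x : ℝ) : ℂ))

/-- `g` has Fourier transform (profile) `v`, i.e. `ĝ = v ∈ L¹` and
`g(x) = ∫ v(ξ) e^{i x·ξ} dξ`. -/
def HasFT {d : ℕ} (g : Ed d → ℂ) (v : Ed d → ℂ) : Prop :=
  Integrable v ∧ ∀ x, g x = invFT v x

/-- The spectral Barron weight `(1+|ξ|²)^{s/2}`. -/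
def bWeight (s : ℝ) {d : ℕ} (ξ : Ed d) : ℝ := (1 + ‖ξ‖ ^ 2) ^ (s / 2)

/-- The spectral Barron norm `∫ |ĝ(ξ)| (1+|ξ|²)^{s/2} dξ`, expressed in terms of `v = ĝ`. -/
def bNorm {d : ℕ} (s : ℝ) (v : Ed d → ℂ) : ℝ := ∫ ξ, ‖v ξ‖ * bWeight s ξ

/-- Membership in the spectral Barron space `B^s`, on the Fourier side. -/
def bMem {d : ℕ} (s : ℝ) (v : Ed d → ℂ) : Prop :=
  Integrable (fun ξ => ‖v ξ‖ * bWeight s ξ)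

/-! On the Fourier side the equation says `(α + |ξ|²) û = f̂ - Ŵ ∗ û`. Since
`(1 + |ξ|²) / (α + |ξ|²) ≤ 1 / min α 1`, the `B^{s+2}` weight of `û` is bounded by the `B^s`
weight of `f̂ - Ŵ ∗ û`. The convolution is handled by Peetre's inequality
`(1 + |η + ζ|²)^{s/2} ≤ 2^{s/2} (1 + |η|²)^{s/2} (1 + |ζ|²)^{s/2}` and Tonelli. Everything is
estimated as a lower Lebesgue integral, so that the membership `û ∈ B^{s+2}` comes out of the
same bound as the norm estimate. -/

open scoped ENNReal

section LConvolution

variable {G : Type*} [MeasurableSpace G] [AddGroup G] {μ : Measure G}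

theorem lconvolution_mul_le {f g w : G → ℝ≥0∞} {C : ℝ≥0∞} (hC : C ≠ ∞)
    (hw : ∀ x y, w x ≤ C * (w y * w (-y + x))) (x : G) :
    (f ⋆ₗ[μ] g) x * w x ≤ C * ((f * w) ⋆ₗ[μ] (g * w)) x := by
  simp only [lconvolution_def, Pi.mul_apply]
  rw [← lintegral_const_mul' _ _ hC]
  refine (lintegral_mul_const_le _ _).trans (lintegral_mono fun y => ?_)
  calc f y * g (-y + x) * w x ≤ f y * g (-y + x) * (C * (w y * w (-y + x))) := by
        gcongr; exact hw x y
    _ = C * (f y * w y * (g (-y + x) * w (-y + x))) := by ring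

variable [MeasurableAdd₂ G] [MeasurableNeg G] [μ.IsAddLeftInvariant] [SFinite μ]

theorem lintegral_lconvolution {f g : G → ℝ≥0∞} (hf : AEMeasurable f μ)
    (hg : AEMeasurable g μ) :
    ∫⁻ x, (f ⋆ₗ[μ] g) x ∂μ = (∫⁻ x, f x ∂μ) * ∫⁻ x, g x ∂μ := by
  simp only [lconvolution_def]
  rw [lintegral_lintegral_swap (by fun_prop)]
  calc ∫⁻ y, ∫⁻ x, f y * g (-y + x) ∂μ ∂μ
      = ∫⁻ y, f y * ∫⁻ x, g (-y + x) ∂μ ∂μ := by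
        refine lintegral_congr fun y => lintegral_const_mul'' _ ?_
        exact hg.comp_quasiMeasurePreserving
          (measurePreserving_add_left μ (-y)).quasiMeasurePreserving
    _ = ∫⁻ y, f y * ∫⁻ x, g x ∂μ ∂μ := by simp only [lintegral_add_left_eq_self]
    _ = (∫⁻ x, f x ∂μ) * ∫⁻ x, g x ∂μ := lintegral_mul_const'' _ hf

theorem lintegral_lconvolution_mul_le {f g w : G → ℝ≥0∞} {C : ℝ≥0∞} (hC : C ≠ ∞)
    (hw : ∀ x y, w x ≤ C * (w y * w (-y + x))) (hf : AEMeasurable f μ)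
    (hg : AEMeasurable g μ) (hw_meas : Measurable w) :
    ∫⁻ x, (f ⋆ₗ[μ] g) x * w x ∂μ ≤ C * ((∫⁻ x, f x * w x ∂μ) * ∫⁻ x, g x * w x ∂μ) := by
  calc ∫⁻ x, (f ⋆ₗ[μ] g) x * w x ∂μ ≤ ∫⁻ x, C * ((f * w) ⋆ₗ[μ] (g * w)) x ∂μ :=
        lintegral_mono (lconvolution_mul_le hC hw)
    _ = C * ((∫⁻ x, f x * w x ∂μ) * ∫⁻ x, g x * w x ∂μ) := by
        rw [lintegral_const_mul' _ _ hC,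
          lintegral_lconvolution (hf.mul hw_meas.aemeasurable) (hg.mul hw_meas.aemeasurable)]
        rfl

end LConvolution

section Barron

variable {d : ℕ}

theorem bWeight_pos (s : ℝ) (ξ : Ed d) : 0 < bWeight s ξ := by
  unfold bWeight; positivity

theorem continuous_bWeight (s : ℝ) : Continuous (bWeight s (d := d)) :=
  Continuous.rpow_const (by fun_prop) fun _ => Or.inl (by positivity)

theorem bWeight_add_two (s : ℝ) (ξ : Ed d) :
    bWeight (s + 2) ξ = bWeight s ξ * (1 + ‖ξ‖ ^ 2) := by
  unfold bWeight
  rw [show (s + 2) / 2 = s / 2 + 1 by ring, Real.rpow_add (by positivity), Real.rpow_one]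

theorem bWeight_add_le {s : ℝ} (hs : 0 ≤ s) (η ζ : Ed d) :
    bWeight s (η + ζ) ≤ 2 ^ (s / 2) * (bWeight s η * bWeight s ζ) := by
  have key : 1 + ‖η + ζ‖ ^ 2 ≤ 2 * ((1 + ‖η‖ ^ 2) * (1 + ‖ζ‖ ^ 2)) := by
    nlinarith [norm_add_le η ζ, norm_nonneg (η + ζ), norm_nonneg η, norm_nonneg ζ,
      sq_nonneg (‖η‖ - ‖ζ‖), sq_nonneg (‖η‖ * ‖ζ‖)]
  calc bWeight s (η + ζ) ≤ (2 * ((1 + ‖η‖ ^ 2) * (1 + ‖ζ‖ ^ 2))) ^ (s / 2) :=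
        Real.rpow_le_rpow (by positivity) key (by positivity)
    _ = 2 ^ (s / 2) * (bWeight s η * bWeight s ζ) := by
        rw [Real.mul_rpow (by norm_num) (by positivity),
          Real.mul_rpow (by positivity) (by positivity)]
        rfl

theorem ofReal_bWeight_le {s : ℝ} (hs : 0 ≤ s) (ξ η : Ed d) :
    ENNReal.ofReal (bWeight s ξ) ≤ ENNReal.ofReal (2 ^ (s / 2)) *
      (ENNReal.ofReal (bWeight s η) * ENNReal.ofReal (bWeight s (-η + ξ))) := by
  rw [← ENNReal.ofReal_mul (bWeight_pos s η).le, ← ENNReal.ofReal_mul (by positivity)]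
  refine ENNReal.ofReal_le_ofReal ?_
  simpa using bWeight_add_le hs η (-η + ξ)

theorem bNorm_nonneg (s : ℝ) (v : Ed d → ℂ) : 0 ≤ bNorm s v :=
  integral_nonneg fun ξ => mul_nonneg (norm_nonneg _) (bWeight_pos s ξ).le

theorem bMem.aemeasurable_norm {s : ℝ} {v : Ed d → ℂ} (hv : bMem s v) :
    AEMeasurable (fun ξ => ‖v ξ‖) := by
  have hinv : Measurable fun ξ : Ed d => (bWeight s ξ)⁻¹ :=
    ((continuous_bWeight s).inv₀ fun ξ => (bWeight_pos s ξ).ne').measurable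
  refine (hv.aemeasurable.mul hinv.aemeasurable).congr (.of_forall fun ξ => ?_)
  exact mul_inv_cancel_right₀ (bWeight_pos s ξ).ne' _

theorem bMem.aemeasurable_enorm {s : ℝ} {v : Ed d → ℂ} (hv : bMem s v) :
    AEMeasurable (fun ξ => ‖v ξ‖ₑ) := by
  simpa only [ofReal_norm] using hv.aemeasurable_norm.ennreal_ofReal

theorem lintegral_enorm_mul_bWeight {s : ℝ} {v : Ed d → ℂ} (hv : bMem s v) :
    ∫⁻ ξ, ‖v ξ‖ₑ * ENNReal.ofReal (bWeight s ξ) = ENNReal.ofReal (bNorm s v) := by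
  rw [bNorm, ofReal_integral_eq_lintegral_ofReal hv
    (.of_forall fun ξ => mul_nonneg (norm_nonneg _) (bWeight_pos s ξ).le)]
  simp only [ENNReal.ofReal_mul (norm_nonneg _), ofReal_norm]

theorem bMem_and_bNorm_le_of_lintegral_le {s t B : ℝ} {v : Ed d → ℂ} (hv : bMem s v)
    (hB : 0 ≤ B)
    (h : ∫⁻ ξ, ‖v ξ‖ₑ * ENNReal.ofReal (bWeight t ξ) ≤ ENNReal.ofReal B) :
    bMem t v ∧ bNorm t v ≤ B := by
  have hmem : bMem t v := by
    refine ⟨(hv.aemeasurable_norm.mul (continuous_bWeight t).measurable.aemeasurable)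
      |>.aestronglyMeasurable, ?_⟩
    rw [hasFiniteIntegral_iff_ofReal
      (.of_forall fun ξ => mul_nonneg (norm_nonneg _) (bWeight_pos t ξ).le)]
    simp only [ENNReal.ofReal_mul (norm_nonneg _), ofReal_norm]
    exact h.trans_lt ENNReal.ofReal_lt_top
  refine ⟨hmem, ?_⟩
  rwa [lintegral_enorm_mul_bWeight hmem, ENNReal.ofReal_le_ofReal_iff hB] at h

theorem one_add_div_add_le_one_div_min {α x : ℝ} (hα : 0 < α) (hx : 0 ≤ x) :
    (1 + x) / (α + x) ≤ 1 / min α 1 := by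
  rw [div_le_div_iff₀ (by positivity) (lt_min hα one_pos)]
  nlinarith [min_le_left α 1, min_le_right α 1, mul_nonneg (sub_nonneg.mpr (min_le_right α 1)) hx]

theorem norm_div_mul_bWeight_add_two_le {α : ℝ} (hα : 0 < α) (s : ℝ) (z : ℂ) (ξ : Ed d) :
    ‖z / ((α : ℂ) + (‖ξ‖ : ℂ) ^ 2)‖ * bWeight (s + 2) ξ ≤ 1 / min α 1 * (‖z‖ * bWeight s ξ) := by
  have hsymb : ((α : ℂ) + (‖ξ‖ : ℂ) ^ 2) = ((α + ‖ξ‖ ^ 2 : ℝ) : ℂ) := by push_cast; rfl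
  rw [hsymb, norm_div, Complex.norm_real, Real.norm_of_nonneg (by positivity), bWeight_add_two]
  calc ‖z‖ / (α + ‖ξ‖ ^ 2) * (bWeight s ξ * (1 + ‖ξ‖ ^ 2))
      = (1 + ‖ξ‖ ^ 2) / (α + ‖ξ‖ ^ 2) * (‖z‖ * bWeight s ξ) := by ring
    _ ≤ 1 / min α 1 * (‖z‖ * bWeight s ξ) :=
        mul_le_mul_of_nonneg_right (one_add_div_add_le_one_div_min hα (by positivity))
          (mul_nonneg (norm_nonneg z) (bWeight_pos s ξ).le)

theorem enorm_mul_bWeight_add_two_le_of_eq {α s : ℝ} (hα : 0 < α) {ξ : Ed d} {u c f : ℂ}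
    (h : u + c / ((α : ℂ) + (‖ξ‖ : ℂ) ^ 2) = f / ((α : ℂ) + (‖ξ‖ : ℂ) ^ 2)) :
    ‖u‖ₑ * ENNReal.ofReal (bWeight (s + 2) ξ) ≤
      ENNReal.ofReal (1 / min α 1) * ((‖f‖ₑ + ‖c‖ₑ) * ENNReal.ofReal (bWeight s ξ)) := by
  have hu : u = (f - c) / ((α : ℂ) + (‖ξ‖ : ℂ) ^ 2) := by rw [sub_div, ← h, add_sub_cancel_right]
  calc ‖u‖ₑ * ENNReal.ofReal (bWeight (s + 2) ξ)
      = ENNReal.ofReal (‖u‖ * bWeight (s + 2) ξ) := by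
        rw [ENNReal.ofReal_mul (norm_nonneg _), ofReal_norm]
    _ ≤ ENNReal.ofReal (1 / min α 1 * (‖f - c‖ * bWeight s ξ)) :=
        ENNReal.ofReal_le_ofReal (hu ▸ norm_div_mul_bWeight_add_two_le hα s (f - c) ξ)
    _ = ENNReal.ofReal (1 / min α 1) * (‖f - c‖ₑ * ENNReal.ofReal (bWeight s ξ)) := by
        rw [ENNReal.ofReal_mul (by positivity), ENNReal.ofReal_mul (norm_nonneg _), ofReal_norm]
    _ ≤ ENNReal.ofReal (1 / min α 1) * ((‖f‖ₑ + ‖c‖ₑ) * ENNReal.ofReal (bWeight s ξ)) := by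
        gcongr; exact enorm_sub_le

theorem enorm_integral_mul_sub_le_lconvolution (f g : Ed d → ℂ) (ξ : Ed d) :
    ‖∫ η, f η * g (ξ - η)‖ₑ ≤ ((fun η => ‖f η‖ₑ) ⋆ₗ fun η => ‖g η‖ₑ) ξ := by
  refine (enorm_integral_le_lintegral_enorm _).trans_eq (lintegral_congr fun η => ?_)
  rw [enorm_mul, neg_add_eq_sub]

theorem lintegral_lconvolution_mul_bWeight_le {s : ℝ} (hs : 0 ≤ s) {v g : Ed d → ℂ}
    (hv : bMem s v) (hg : bMem s g) :
    ∫⁻ ξ, ((fun η => ‖v η‖ₑ) ⋆ₗ fun η => ‖g η‖ₑ) ξ * ENNReal.ofReal (bWeight s ξ) ≤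
      ENNReal.ofReal (2 ^ (s / 2)) * (ENNReal.ofReal (bNorm s v) * ENNReal.ofReal (bNorm s g)) := by
  rw [← lintegral_enorm_mul_bWeight hv, ← lintegral_enorm_mul_bWeight hg]
  exact lintegral_lconvolution_mul_le ENNReal.ofReal_ne_top (ofReal_bWeight_le hs)
    hv.aemeasurable_enorm hg.aemeasurable_enorm (continuous_bWeight s).measurable.ennreal_ofReal

end Barron

/-- **bootstrap step.** Let `u*` be a `B^s` solution of the integral
equation `u + (α-Δ)⁻¹(Wu) = (α-Δ)⁻¹ f` (on the Fourier side:
`û(ξ) + (Ŵ∗û)(ξ)/(α+|ξ|²) = f̂(ξ)/(α+|ξ|²)` a.e.), with `α > 0`, `s ≥ 0`,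
`W, f ∈ B^s(ℝ^d)`. Then `u* ∈ B^{s+2}(ℝ^d)` with
`‖u*‖_{B^{s+2}} ≤ (1/min{α,1}) (2^{s/2} ‖W‖_{B^s} ‖u*‖_{B^s} + ‖f‖_{B^s})`. -/
theorem barron_bootstrap {d : ℕ} (s α : ℝ) (hs : 0 ≤ s) (hα : 0 < α)
    (vW vf vu : Ed d → ℂ) (hWs : bMem s vW) (hfs : bMem s vf) (hus : bMem s vu)
    (heq : ∀ᵐ ξ : Ed d,
      vu ξ + (∫ η, vW η * vu (ξ - η)) / ((α : ℂ) + (‖ξ‖ : ℂ) ^ 2) =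
        vf ξ / ((α : ℂ) + (‖ξ‖ : ℂ) ^ 2)) :
    bMem (s + 2) vu ∧
    bNorm (s + 2) vu ≤
      (1 / min α 1) * ((2 : ℝ) ^ (s / 2) * bNorm s vW * bNorm s vu + bNorm s vf) := by
  set w : ℝ → Ed d → ℝ≥0∞ := fun t ξ => ENNReal.ofReal (bWeight t ξ)
  set conv := (fun η => ‖vW η‖ₑ) ⋆ₗ fun η => ‖vu η‖ₑ
  have hpointwise : ∀ᵐ ξ, ‖vu ξ‖ₑ * w (s + 2) ξ ≤
      ENNReal.ofReal (1 / min α 1) * ((‖vf ξ‖ₑ + conv ξ) * w s ξ) := by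
    filter_upwards [heq] with ξ hξ
    refine (enorm_mul_bWeight_add_two_le_of_eq hα hξ).trans ?_
    gcongr
    exact enorm_integral_mul_sub_le_lconvolution vW vu ξ
  have hproduct := lintegral_lconvolution_mul_bWeight_le hs hWs hus
  have hnW := bNorm_nonneg s vW
  have hnu := bNorm_nonneg s vu
  have hnf := bNorm_nonneg s vf
  refine bMem_and_bNorm_le_of_lintegral_le hus (by positivity) ?_
  calc ∫⁻ ξ, ‖vu ξ‖ₑ * w (s + 2) ξ
      ≤ ENNReal.ofReal (1 / min α 1) * ((∫⁻ ξ, ‖vf ξ‖ₑ * w s ξ) + ∫⁻ ξ, conv ξ * w s ξ) := by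
        have hfw : AEMeasurable fun ξ => ‖vf ξ‖ₑ * w s ξ :=
          hfs.aemeasurable_enorm.mul (continuous_bWeight s).measurable.ennreal_ofReal.aemeasurable
        rw [← lintegral_add_left' hfw,
          ← lintegral_const_mul' _ _ ENNReal.ofReal_ne_top]
        simpa only [add_mul] using lintegral_mono_ae hpointwise
    _ ≤ ENNReal.ofReal (1 / min α 1) * (ENNReal.ofReal (bNorm s vf) +
          ENNReal.ofReal (2 ^ (s / 2)) *
            (ENNReal.ofReal (bNorm s vW) * ENNReal.ofReal (bNorm s vu))) := by
        rw [lintegral_enorm_mul_bWeight hfs]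
        gcongr
    _ = _ := by
        rw [← ENNReal.ofReal_mul (by positivity), ← ENNReal.ofReal_mul (by positivity),
          ← ENNReal.ofReal_add (by positivity) (by positivity),
          ← ENNReal.ofReal_mul (by positivity)]
        ring_nf
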